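/- arXiv:1911.08732 — 2 statements merged into one kernel-verified Lean document; each statement's English description precedes it below -/
import Mathlib

section
/- Let R be a single increasing row, and let x,y,z and x',y',z' be letters with xyz ~ x'y'z' under a Knuth, weak Knuth, or Hecke micro-move, such that row(R)·x·y·z is fully-commutative. Then inserting x,y,z successively into R under *-insertion yields the same resulting first row as inserting x',y',z', and the respective sequences of output letters from the row are related by a micro-move (where outputs 0 commute freely). -/
/-- One elementary relation of the 0-Hecke monoid applied somewhere inside a word
(letters are positive integers; `p + 1 < q ∨ q + 1 < p` encodes `|p - q| > 1`). -/
inductive HeckeStep : List ℕ → List ℕ → Prop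
  | comm (u v : List ℕ) (p q : ℕ) (hpq : p + 1 < q ∨ q + 1 < p) :
      HeckeStep (u ++ p :: q :: v) (u ++ q :: p :: v)
  | braid (u v : List ℕ) (p q : ℕ) :
      HeckeStep (u ++ p :: q :: p :: v) (u ++ q :: p :: q :: v)
  | idem (u v : List ℕ) (p : ℕ) :
      HeckeStep (u ++ p :: p :: v) (u ++ p :: v)

/-- 0-Hecke equivalence of words. -/
def HeckeEquiv : List ℕ → List ℕ → Prop := Relation.EqvGen HeckeStep

/-- A word contains a consecutive braid subword `i (i+1) i` or `(i+1) i (i+1)`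
(the latter is the form `i (i-1) i`). -/
def ContainsBraid (w : List ℕ) : Prop :=
  ∃ (u v : List ℕ) (i : ℕ),
    w = u ++ i :: (i+1) :: i :: v ∨ w = u ++ (i+1) :: i :: (i+1) :: v

/-- A word is fully-commutative if no 0-Hecke equivalent word contains a
consecutive braid subword. -/
def FullyCommutative (w : List ℕ) : Prop :=
  ∀ w', HeckeEquiv w w' → ¬ ContainsBraid w'

/-- Micro-moves on 0-Hecke words: Knuth moves (I1), (I2), weak Knuth moves
(II1), (II2), and the Hecke move (III), applied to three consecutive letters. -/
inductive MicroStep : List ℕ → List ℕ → Prop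
  | knuth1 (u v : List ℕ) (x y z : ℕ) (h1 : x < z) (h2 : z < y) :
      MicroStep (u ++ x :: y :: z :: v) (u ++ y :: x :: z :: v)
  | knuth2 (u v : List ℕ) (x y z : ℕ) (h1 : x < z) (h2 : z < y) :
      MicroStep (u ++ z :: x :: y :: v) (u ++ z :: y :: x :: v)
  | weak1 (u v : List ℕ) (x y : ℕ) (h : x + 1 < y) :
      MicroStep (u ++ x :: y :: y :: v) (u ++ y :: x :: y :: v)
  | weak2 (u v : List ℕ) (x y : ℕ) (h : x + 1 < y) :
      MicroStep (u ++ x :: x :: y :: v) (u ++ x :: y :: x :: v)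
  | heckeIII (u v : List ℕ) (x : ℕ) :
      MicroStep (u ++ x :: x :: (x+1) :: v) (u ++ x :: (x+1) :: (x+1) :: v)

/-- The equivalence relation generated by the micro-moves. -/
def MicroEquiv : List ℕ → List ℕ → Prop := Relation.EqvGen MicroStep

/-- The smallest entry of `R` that is larger than `x` (junk value `0` if none). -/
def minGT (R : List ℕ) (x : ℕ) : ℕ := ((R.filter (fun y => x < y)).min?).getD 0

/-- The smallest `y ≤ x` such that the whole interval `[y, x]` is contained in `R`. -/
noncomputable def intervalMin (R : List ℕ) (x : ℕ) : ℕ :=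
  sInf {y | y ≤ x ∧ ∀ z, y ≤ z → z ≤ x → z ∈ R}

/-- `⋆`-insertion of a letter `x` into a single row `R`: returns the new row and
the letter (if any) bumped into the next row.  Case 1: if `R` is empty or
`x > max R`, append `x`.  Case 3: if `x ∈ R`, leave `R` unchanged and bump the
smallest `y` with `[y,x] ⊆ R`.  Case 2: otherwise replace the smallest `y > x`
by `x` and bump `y`. -/
noncomputable def insertRow (R : List ℕ) (x : ℕ) : List ℕ × Option ℕ :=
  if ∀ y ∈ R, y < x then (R ++ [x], none)
  else if x ∈ R then (R, some (intervalMin R x))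
  else (R.map (fun y => if y = minGT R x then x else y), some (minGT R x))

/-- `⋆`-insertion of a letter into a tableau, whose rows are listed bottom row
first (French notation). -/
noncomputable def insertTab : List (List ℕ) → ℕ → List (List ℕ)
  | [], x => [[x]]
  | R :: rest, x =>
    match (insertRow R x).2 with
    | none => (insertRow R x).1 :: rest
    | some y => (insertRow R x).1 :: insertTab rest y

/-- The row reading word: rows are read from the top row down (French notation),
each row from left to right. -/
def rowWord (T : List (List ℕ)) : List ℕ := T.reverse.flatten

/-- `T` (rows listed bottom row first) is a tableau with strictly increasing rows
whose transpose is semistandard: rows are nonempty with weakly decreasing lengths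
going up, rows strictly increase, and columns weakly increase going up. -/
def TransposeSSYT (T : List (List ℕ)) : Prop :=
  (∀ R ∈ T, R ≠ []) ∧
  List.Chain' (fun a b => b ≤ a) (T.map List.length) ∧
  (∀ R ∈ T, List.Chain' (· < ·) R) ∧
  (∀ r c, r + 1 < T.length → c < (T.getD (r+1) []).length →
    (T.getD r []).getD c 0 ≤ (T.getD (r+1) []).getD c 0)

/-- `T` (rows listed bottom row first) is a semistandard Young tableau: rows are
nonempty with weakly decreasing lengths going up, rows weakly increase, and
columns strictly increase going up. -/
def IsSSYT (T : List (List ℕ)) : Prop :=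
  (∀ R ∈ T, R ≠ []) ∧
  List.Chain' (fun a b => b ≤ a) (T.map List.length) ∧
  (∀ R ∈ T, List.Chain' (· ≤ ·) R) ∧
  (∀ r c, r + 1 < T.length → c < (T.getD (r+1) []).length →
    (T.getD r []).getD c 0 < (T.getD (r+1) []).getD c 0)

/-!
A strictly increasing row is determined by its set of letters, and `⋆`-inserting `x` changes
that set in a controlled way: letters below `x` stay, `x` enters, and of the letters above `x`
only the bumped one leaves. So the two final rows are compared letter by letter, and the output
letters are placed relative to each other by a few inequalities: the letter output by
inserting `x` exceeds every letter `≤ x` missing from the row and is at most every letter `≥ x`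
in it.

The moves (I1) and (II1) both swap the first two letters `a < b` of a word `a b c` with
`a < c ≤ b`; (I2) swaps the last two letters around a middle one; (II2) and (III) insert a
letter `x` already present in the row, which commutes with any larger letter. In each case the
outputs differ by one of the five micro-moves. Full commutativity enters only to exclude a row
containing both `a` and `a + 1` for a letter `a` of the word preceded only by letters commuting
with it: moving `a` next to them would produce the braid `a (a+1) a`.
-/

section IntervalMin

variable {R S : List ℕ} {x y t m : ℕ}

lemma intervalMin_spec (hx : x ∈ R) :
    intervalMin R x ≤ x ∧ ∀ t, intervalMin R x ≤ t → t ≤ x → t ∈ R :=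
  Nat.sInf_mem (s := {y | y ≤ x ∧ ∀ z, y ≤ z → z ≤ x → z ∈ R})
    ⟨x, le_rfl, fun _ h₁ h₂ => le_antisymm h₂ h₁ ▸ hx⟩

lemma intervalMin_le (hx : x ∈ R) : intervalMin R x ≤ x := (intervalMin_spec hx).1

lemma mem_of_intervalMin_le (hx : x ∈ R) (h₁ : intervalMin R x ≤ t) (h₂ : t ≤ x) : t ∈ R :=
  (intervalMin_spec hx).2 t h₁ h₂

lemma intervalMin_le_of_forall_mem (hm : m ≤ x) (h : ∀ t, m ≤ t → t ≤ x → t ∈ R) :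
    intervalMin R x ≤ m :=
  Nat.sInf_le ⟨hm, h⟩

lemma intervalMin_congr (h : ∀ t ≤ x, t ∈ R ↔ t ∈ S) : intervalMin R x = intervalMin S x := by
  unfold intervalMin
  congr 1
  ext m
  exact and_congr_right fun _ => forall_congr' fun t => imp_congr_right fun _ =>
    forall_congr' fun ht => h t ht

lemma intervalMin_eq (h₁ : m ≤ x) (h₂ : ∀ t, m ≤ t → t ≤ x → t ∈ R) (h₃ : ∀ t ∈ R, t + 1 ≠ m) :
    intervalMin R x = m := by
  have hx : x ∈ R := h₂ x h₁ le_rfl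
  refine le_antisymm (intervalMin_le_of_forall_mem h₁ h₂) (not_lt.mp fun hlt => ?_)
  exact h₃ (m - 1) (mem_of_intervalMin_le hx (by omega) (by omega)) (by omega)

lemma intervalMin_pred_not_mem (hx : x ∈ R) (ht : t ∈ R) : t + 1 ≠ intervalMin R x := by
  intro h
  have := intervalMin_le_of_forall_mem (R := R) (m := t) (x := x)
    (by have := intervalMin_le hx; omega) fun s hs hsx =>
      hs.eq_or_lt.elim (fun e => e ▸ ht) fun hlt => mem_of_intervalMin_le hx (by omega) hsx
  omega

lemma intervalMin_eq_of_le_succ (hx : x ∈ R) (hy : y ∈ R) (hxy : x ≤ y)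
    (h : intervalMin R y ≤ x + 1) : intervalMin R x = intervalMin R y := by
  have hle : intervalMin R y ≤ x := by
    by_contra! hlt
    exact intervalMin_pred_not_mem hy hx (by omega)
  exact intervalMin_eq hle (fun t h₁ h₂ => mem_of_intervalMin_le hy h₁ (by omega))
    fun t ht => intervalMin_pred_not_mem hy ht

lemma intervalMin_eq_of_agree (hx : x ∈ R)
    (h : ∀ t, intervalMin R x ≤ t + 1 → t ≤ x → (t ∈ S ↔ t ∈ R)) :
    intervalMin S x = intervalMin R x := by
  refine intervalMin_eq (intervalMin_le hx)
    (fun t h₁ h₂ => (h t (by omega) h₂).2 (mem_of_intervalMin_le hx h₁ h₂)) fun t ht e => ?_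
  exact intervalMin_pred_not_mem hx ((h t e.ge (by have := intervalMin_le hx; omega)).1 ht) e

end IntervalMin

section InsertRow

variable {R S : List ℕ} {b c g t x y : ℕ}

lemma isLeast_minGT (ht : t ∈ R) (hxt : x < t) :
    IsLeast {s | s ∈ R ∧ x < s} (minGT R x) := by
  obtain ⟨a, ha⟩ : ∃ a, (R.filter (x < ·)).min? = some a :=
    Option.ne_none_iff_exists'.mp fun h => by
      simpa [hxt] using List.filter_eq_nil_iff.mp (List.min?_eq_none_iff.mp h) t ht
  have hmin := List.min?_eq_some_iff.mp ha
  simp only [List.mem_filter, decide_eq_true_eq] at hmin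
  rw [minGT, ha, Option.getD_some]
  exact ⟨hmin.1, fun s hs => hmin.2 s (by simpa using hs)⟩

lemma insertRow_of_forall_lt (h : ∀ t ∈ R, t < x) : insertRow R x = (R ++ [x], none) :=
  if_pos h

lemma insertRow_of_mem (h : x ∈ R) : insertRow R x = (R, some (intervalMin R x)) := by
  rw [insertRow, if_neg fun h' => lt_irrefl x (h' x h), if_pos h]

lemma insertRow_of_not_mem (hx : x ∉ R) (ht : t ∈ R) (hxt : x < t) :
    insertRow R x = (R.map fun s => if s = minGT R x then x else s, some (minGT R x)) := by
  rw [insertRow, if_neg fun h => (h t ht).not_gt hxt, if_neg hx]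

lemma exists_lt_mem_of_not_forall_lt (h : ¬ ∀ t ∈ R, t < x) (hx : x ∉ R) :
    ∃ t ∈ R, x < t := by
  push Not at h
  obtain ⟨t, ht, hxt⟩ := h
  exact ⟨t, ht, hxt.lt_of_ne fun e => hx (e ▸ ht)⟩

lemma insertRow_fst_of_mem (h : x ∈ R) : (insertRow R x).1 = R := by
  rw [insertRow_of_mem h]

lemma insertRow_snd_of_mem (h : x ∈ R) : (insertRow R x).2 = some (intervalMin R x) := by
  rw [insertRow_of_mem h]

lemma insertRow_snd_eq_none_iff : (insertRow R x).2 = none ↔ ∀ t ∈ R, t < x := by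
  by_cases h : ∀ t ∈ R, t < x
  · simpa [insertRow_of_forall_lt h]
  by_cases hx : x ∈ R
  · simp [insertRow_of_mem hx, h]
  · obtain ⟨t, ht, hxt⟩ := exists_lt_mem_of_not_forall_lt h hx
    simp [insertRow_of_not_mem hx ht hxt, h]

lemma exists_insertRow_snd_eq_some (ht : t ∈ R) (hxt : x ≤ t) :
    ∃ g, (insertRow R x).2 = some g :=
  Option.ne_none_iff_exists'.mp fun h => (insertRow_snd_eq_none_iff.mp h t ht).not_ge hxt

lemma isLeast_of_insertRow_snd_eq_some (hx : x ∉ R) (h : (insertRow R x).2 = some c) :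
    IsLeast {s | s ∈ R ∧ x < s} c := by
  by_cases hA : ∀ t ∈ R, t < x
  · simp [insertRow_of_forall_lt hA] at h
  obtain ⟨t, ht, hxt⟩ := exists_lt_mem_of_not_forall_lt hA hx
  rw [insertRow_of_not_mem hx ht hxt, Option.some_inj] at h
  exact h ▸ isLeast_minGT ht hxt

lemma insertRow_snd_eq_some_iff (hx : x ∉ R) :
    (insertRow R x).2 = some g ↔ IsLeast {s | s ∈ R ∧ x < s} g := by
  refine ⟨isLeast_of_insertRow_snd_eq_some hx, fun hg => ?_⟩
  rw [insertRow_of_not_mem hx hg.1.1 hg.1.2, (isLeast_minGT hg.1.1 hg.1.2).unique hg]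

lemma insertRow_snd_mem (h : (insertRow R x).2 = some c) : c ∈ R := by
  by_cases hx : x ∈ R
  · rw [insertRow_snd_of_mem hx, Option.some_inj] at h
    exact h ▸ mem_of_intervalMin_le hx le_rfl (intervalMin_le hx)
  · exact (isLeast_of_insertRow_snd_eq_some hx h).1.1

lemma lt_of_insertRow_snd_eq_some (h : (insertRow R x).2 = some c) (ht : t ∉ R) (htx : t ≤ x) :
    t < c := by
  by_cases hx : x ∈ R
  · rw [insertRow_snd_of_mem hx, Option.some_inj] at h
    subst h
    by_contra! hct
    exact ht (mem_of_intervalMin_le hx hct htx)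
  · exact htx.trans_lt (isLeast_of_insertRow_snd_eq_some hx h).1.2

lemma le_of_insertRow_snd_eq_some (h : (insertRow R x).2 = some c) (ht : t ∈ R) (hxt : x ≤ t) :
    c ≤ t := by
  by_cases hx : x ∈ R
  · rw [insertRow_snd_of_mem hx, Option.some_inj] at h
    exact h ▸ (intervalMin_le hx).trans hxt
  · exact (isLeast_of_insertRow_snd_eq_some hx h).2 ⟨ht, hxt.lt_of_ne fun e => hx (e ▸ ht)⟩

lemma mem_map_replace (hg : g ∈ R) :
    t ∈ R.map (fun s => if s = g then x else s) ↔ t ∈ R ∧ t ≠ g ∨ t = x := by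
  simp only [List.mem_map]
  constructor
  · rintro ⟨s, hs, rfl⟩
    split_ifs with h
    exacts [Or.inr rfl, Or.inl ⟨hs, h⟩]
  · rintro (⟨ht, htg⟩ | rfl)
    exacts [⟨t, ht, if_neg htg⟩, ⟨g, hg, if_pos rfl⟩]

lemma mem_insertRow_fst :
    t ∈ (insertRow R x).1 ↔ t = x ∨ t ∈ R ∧ (x < t → (insertRow R x).2 ≠ some t) := by
  by_cases hA : ∀ s ∈ R, s < x
  · rw [insertRow_of_forall_lt hA]
    simp only [List.mem_append, List.mem_singleton, ne_eq, reduceCtorEq, not_false_eq_true,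
      implies_true, and_true]
    tauto
  by_cases hx : x ∈ R
  · rw [insertRow_of_mem hx]
    have := intervalMin_le hx
    grind
  · obtain ⟨s, hs, hxs⟩ := exists_lt_mem_of_not_forall_lt hA hx
    obtain ⟨⟨hg, hxg⟩, -⟩ := isLeast_minGT hs hxs
    rw [insertRow_of_not_mem hx hs hxs, mem_map_replace hg]
    grind

lemma mem_insertRow_fst_of_lt (h : t < x) : t ∈ (insertRow R x).1 ↔ t ∈ R := by
  rw [mem_insertRow_fst]; grind

lemma mem_insertRow_fst_of_gt (h : x < t) :
    t ∈ (insertRow R x).1 ↔ t ∈ R ∧ (insertRow R x).2 ≠ some t := by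
  rw [mem_insertRow_fst]; grind

lemma self_mem_insertRow_fst : x ∈ (insertRow R x).1 := mem_insertRow_fst.2 (Or.inl rfl)

lemma lt_of_mem_insertRow_fst (hx : x ∉ R) (hg : (insertRow R x).2 = some g)
    (ht : t ∈ (insertRow R x).1) (hxt : x < t) : g < t := by
  rw [mem_insertRow_fst_of_gt hxt, hg, ne_eq, Option.some_inj] at ht
  exact ((isLeast_of_insertRow_snd_eq_some hx hg).2 ⟨ht.1, hxt⟩).lt_of_ne ht.2

lemma not_mem_insertRow_fst (hx : x ∉ R) (hg : (insertRow R x).2 = some g) :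
    g ∉ (insertRow R x).1 := fun h =>
  (lt_of_mem_insertRow_fst hx hg h (isLeast_of_insertRow_snd_eq_some hx hg).1.2).false

lemma succ_not_mem_insertRow_fst (hx : x ∉ R) : x + 1 ∉ (insertRow R x).1 := by
  rw [mem_insertRow_fst_of_gt (Nat.lt_succ_self x)]
  rintro ⟨hx1, hne⟩
  obtain ⟨g, hg⟩ := exists_insertRow_snd_eq_some hx1 (Nat.le_succ x)
  have := le_of_insertRow_snd_eq_some hg hx1 (Nat.le_succ x)
  have := (isLeast_of_insertRow_snd_eq_some hx hg).1.2
  exact hne (hg.trans (congrArg some (by omega)))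

lemma insertRow_snd_insertRow_eq_none (h : (insertRow R x).2 = none) (hxy : x < y) :
    (insertRow (insertRow R x).1 y).2 = none := by
  rw [insertRow_snd_eq_none_iff] at h ⊢
  intro t ht
  rw [mem_insertRow_fst] at ht
  grind

lemma pairwise_insertRow_fst (hR : R.Pairwise (· < ·)) :
    (insertRow R x).1.Pairwise (· < ·) := by
  by_cases hA : ∀ t ∈ R, t < x
  · rw [insertRow_of_forall_lt hA, List.pairwise_append]
    simpa [hR] using hA
  by_cases hx : x ∈ R
  · rwa [insertRow_fst_of_mem hx]
  obtain ⟨s, hs, hxs⟩ := exists_lt_mem_of_not_forall_lt hA hx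
  obtain ⟨⟨hg, hxg⟩, hleast⟩ := isLeast_minGT hs hxs
  rw [insertRow_of_not_mem hx hs hxs, List.pairwise_map]
  refine hR.imp_of_mem fun {p q} hp hq hpq => ?_
  have hgap : ∀ t ∈ R, t < minGT R x → t < x := fun t ht htg =>
    lt_of_le_of_ne (not_lt.mp fun hxt => (hleast ⟨ht, hxt⟩).not_gt htg) fun e => hx (e ▸ ht)
  split_ifs with h₁ h₂ h₂ <;> grind

lemma intervalMin_insertRow_fst_of_lt (h : t < x) :
    intervalMin (insertRow R x).1 t = intervalMin R t :=
  intervalMin_congr fun _ hs => mem_insertRow_fst_of_lt (hs.trans_lt h)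

lemma intervalMin_insertRow_fst_of_succ_lt (hx : x ∉ R) (hg : (insertRow R x).2 = some g)
    (hy : y ∈ R) (h : g + 1 < intervalMin R y) :
    intervalMin (insertRow R x).1 y = intervalMin R y := by
  have hxg := (isLeast_of_insertRow_snd_eq_some hx hg).1.2
  refine intervalMin_eq_of_agree hy fun t h₁ _ => ?_
  rw [mem_insertRow_fst_of_gt (by omega), hg, ne_eq, Option.some_inj]
  exact ⟨And.left, fun h => ⟨h, by omega⟩⟩

lemma insertRow_snd_eq_of_agree (hx : x ∉ R) (hx' : x ∉ S)
    (h : ∀ t, x < t → (t ∈ R ↔ t ∈ S)) : (insertRow R x).2 = (insertRow S x).2 := by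
  have hset : {s | s ∈ R ∧ x < s} = {s | s ∈ S ∧ x < s} := by
    ext s
    exact ⟨fun h' => ⟨(h s h'.2).1 h'.1, h'.2⟩, fun h' => ⟨(h s h'.2).2 h'.1, h'.2⟩⟩
  rcases hS : (insertRow S x).2 with _ | g
  · rw [insertRow_snd_eq_none_iff] at hS ⊢
    intro t ht
    by_contra! hxt
    have hxt' : x < t := hxt.lt_of_ne fun e => hx (e ▸ ht)
    exact (hS t ((h t hxt').1 ht)).not_gt hxt'
  · rwa [insertRow_snd_eq_some_iff hx, hset, ← insertRow_snd_eq_some_iff hx']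

lemma insertRow_congr (h : ∀ t, t ∈ R ↔ t ∈ S) :
    (insertRow R x).2 = (insertRow S x).2 ∧
      ∀ t, t ∈ (insertRow R x).1 ↔ t ∈ (insertRow S x).1 := by
  have hsnd : (insertRow R x).2 = (insertRow S x).2 := by
    by_cases hx : x ∈ R
    · rw [insertRow_snd_of_mem hx, insertRow_snd_of_mem ((h x).1 hx),
        intervalMin_congr fun t _ => h t]
    · exact insertRow_snd_eq_of_agree hx (fun h' => hx ((h x).2 h')) fun t _ => h t
  refine ⟨hsnd, fun t => ?_⟩
  rw [mem_insertRow_fst, mem_insertRow_fst, hsnd, h t]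

lemma insertRow_snd_of_gap (hb : b ∈ R) (hcb : c ≤ b)
    (h : ∀ t ∈ R, t < b → t + 1 < b ∧ t < c) : (insertRow R c).2 = some b := by
  rcases hcb.lt_or_eq with hlt | rfl
  · have hc : c ∉ R := fun hc => (h c hc hlt).2.false
    rw [insertRow_snd_eq_some_iff hc]
    exact ⟨⟨hb, hlt⟩, fun s ⟨hs, hcs⟩ => not_lt.mp fun hsb => (h s hs hsb).2.not_gt hcs⟩
  · rw [insertRow_snd_of_mem hb, intervalMin_eq le_rfl (fun t h₁ h₂ => le_antisymm h₂ h₁ ▸ hb)]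
    exact fun t ht e => (h t ht (by omega)).1.ne e

lemma insertRow_snd_eq_of_gap (hx : x ∉ R) (hy : y ∉ R) (hxy : x ≤ y)
    (h : ∀ t ∈ R, x < t → y < t) : (insertRow R x).2 = (insertRow R y).2 := by
  rcases hR : (insertRow R y).2 with _ | g
  · rw [insertRow_snd_eq_none_iff] at hR ⊢
    intro t ht
    by_contra! hxt
    exact (hR t ht).not_gt (h t ht (hxt.lt_of_ne fun e => hx (e ▸ ht)))
  · have hset : {s | s ∈ R ∧ x < s} = {s | s ∈ R ∧ y < s} := by
      ext s
      exact ⟨fun h' => ⟨h'.1, h s h'.1 h'.2⟩, fun h' => ⟨h'.1, hxy.trans_lt h'.2⟩⟩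
    rwa [insertRow_snd_eq_some_iff hx, hset, ← insertRow_snd_eq_some_iff hy]

end InsertRow

section TwoInsertions

variable {R : List ℕ} {a b c d e g u x y : ℕ}

lemma insertRow_insertRow_of_mem_of_lt (hx : x ∈ R) (hxy : x < y) :
    insertRow (insertRow R y).1 x = ((insertRow R y).1, some (intervalMin R x)) := by
  rw [insertRow_of_mem ((mem_insertRow_fst_of_lt hxy).2 hx), intervalMin_insertRow_fst_of_lt hxy]

/-- The second condition says that `x` bumps a letter below `y`, so the two insertions touch
disjoint parts of the row. -/
lemma insertRow_insertRow_comm (hxy : x < y) (h : x ∈ R ∨ y ∉ R ∧ ∃ t ∈ R, x < t ∧ t < y) :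
    (insertRow (insertRow R x).1 y).2 = (insertRow R y).2 ∧
      (insertRow (insertRow R y).1 x).2 = (insertRow R x).2 ∧
      ∀ t, t ∈ (insertRow (insertRow R x).1 y).1 ↔ t ∈ (insertRow (insertRow R y).1 x).1 := by
  by_cases hx : x ∈ R
  · rw [insertRow_insertRow_of_mem_of_lt hx hxy, insertRow_fst_of_mem hx, insertRow_snd_of_mem hx]
    exact ⟨rfl, rfl, fun _ => Iff.rfl⟩
  obtain ⟨hy, t, ht, hxt, hty⟩ := h.resolve_left hx
  obtain ⟨g, hg⟩ := exists_insertRow_snd_eq_some ht hxt.le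
  have hgy : g < y := (le_of_insertRow_snd_eq_some hg ht hxt.le).trans_lt hty
  have hxg := (isLeast_of_insertRow_snd_eq_some hx hg).1.2
  have h₁ : (insertRow (insertRow R x).1 y).2 = (insertRow R y).2 := by
    refine insertRow_snd_eq_of_agree ?_ hy fun s hys => ?_
    · rw [mem_insertRow_fst_of_gt hxy]; exact fun h' => hy h'.1
    · rw [mem_insertRow_fst_of_gt (hxy.trans hys), hg]; grind
  have hxRy : x ∉ (insertRow R y).1 := by rwa [mem_insertRow_fst_of_lt hxy]
  have h₂ : (insertRow (insertRow R y).1 x).2 = some g := by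
    rw [insertRow_snd_eq_some_iff hxRy]
    refine ⟨⟨(mem_insertRow_fst_of_lt hgy).2 (insertRow_snd_mem hg), hxg⟩, fun s ⟨hs, hxs⟩ => ?_⟩
    rw [mem_insertRow_fst] at hs
    rcases hs with rfl | ⟨hs, -⟩
    · exact hgy.le
    · exact (isLeast_of_insertRow_snd_eq_some hx hg).2 ⟨hs, hxs⟩
  refine ⟨h₁, h₂.trans hg.symm, fun s => ?_⟩
  rw [mem_insertRow_fst, mem_insertRow_fst, mem_insertRow_fst, mem_insertRow_fst, h₁, h₂, hg]
  grind

lemma insertRow_insertRow_of_gap (haR : a ∉ R) (hab : a < b) (hgap : ∀ t ∈ R, a < t → b ≤ t) :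
    (insertRow R b).2 = (insertRow R a).2 ∧ (insertRow (insertRow R b).1 a).2 = some b ∧
      ∀ t, t ∈ (insertRow (insertRow R b).1 a).1 ↔ t ∈ (insertRow R a).1 := by
  have hbRa : b ∈ R → (insertRow R a).2 = some b := fun hbR =>
    (insertRow_snd_eq_some_iff haR).2 ⟨⟨hbR, hab⟩, fun s ⟨hs, has⟩ => hgap s hs has⟩
  have hbo : (insertRow R b).2 = (insertRow R a).2 := by
    by_cases hbR : b ∈ R
    · rw [hbRa hbR, insertRow_snd_of_mem hbR, intervalMin_eq le_rfl
        (fun t h₁ h₂ => le_antisymm h₂ h₁ ▸ hbR) fun t ht e => ?_]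
      exact haR (le_antisymm (not_lt.mp fun hat => (hgap t ht hat).not_gt (by omega))
        (by omega) ▸ ht)
    · exact (insertRow_snd_eq_of_gap haR hbR hab.le fun t ht hat =>
        (hgap t ht hat).lt_of_ne fun e => hbR (e ▸ ht)).symm
  have haU : a ∉ (insertRow R b).1 := by rwa [mem_insertRow_fst_of_lt hab]
  have hUa : (insertRow (insertRow R b).1 a).2 = some b := by
    rw [insertRow_snd_eq_some_iff haU]
    refine ⟨⟨self_mem_insertRow_fst, hab⟩, fun s ⟨hs, has⟩ => ?_⟩
    rw [mem_insertRow_fst] at hs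
    rcases hs with rfl | ⟨hs, -⟩
    exacts [le_rfl, hgap s hs has]
  refine ⟨hbo, hUa, fun t => ?_⟩
  rw [mem_insertRow_fst, mem_insertRow_fst, mem_insertRow_fst, hUa, hbo]
  grind

lemma le_of_insertRow_insertRow (hcb : c ≤ b) (hd : (insertRow (insertRow R b).1 c).2 = some d)
    (he : (insertRow R b).2 = some e) : d ≤ e := by
  by_cases hb : b ∈ R
  · rw [insertRow_fst_of_mem hb] at hd
    rw [insertRow_snd_of_mem hb, Option.some_inj] at he
    subst he
    by_cases hce : c ≤ intervalMin R b
    · exact le_of_insertRow_snd_eq_some hd (mem_of_intervalMin_le hb le_rfl (intervalMin_le hb)) hce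
    · have hc : c ∈ R := mem_of_intervalMin_le hb (by omega) hcb
      rw [insertRow_snd_of_mem hc, Option.some_inj] at hd
      exact hd ▸ intervalMin_le_of_forall_mem (by omega)
        fun t h₁ h₂ => mem_of_intervalMin_le hb h₁ (h₂.trans hcb)
  · exact (le_of_insertRow_snd_eq_some hd self_mem_insertRow_fst hcb).trans
      (isLeast_of_insertRow_snd_eq_some hb he).1.2.le

lemma lt_of_insertRow_snd_of_forall_mem (hd : (insertRow R c).2 = some d) (hac : a < c)
    (hag : a < g) (h : ∀ t ∈ R, a < t → g < t) : g < d := by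
  by_cases hc : c ∈ R
  · exact lt_of_insertRow_snd_eq_some hd (fun hg => (h g hg hag).false) (h c hc hac).le
  · have ⟨hdR, hcd⟩ := (isLeast_of_insertRow_snd_eq_some hc hd).1
    exact h d hdR (hac.trans hcd)

lemma exists_insertRow_snd_between (hac : a < c) (hcb : c < b) (hc : c ∈ R → c + 1 ∉ R)
    (hu : (insertRow (insertRow R c).1 a).2 = some u)
    (he : (insertRow (insertRow R c).1 b).2 = some e) :
    ∃ w, (insertRow R c).2 = some w ∧ u ≤ w ∧ w < e ∧ u + 1 < e := by
  have hc1 : c + 1 ∉ (insertRow R c).1 := by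
    by_cases hcR : c ∈ R
    · rw [insertRow_fst_of_mem hcR]; exact hc hcR
    · exact succ_not_mem_insertRow_fst hcR
  have hce : c + 1 < e := lt_of_insertRow_snd_eq_some he hc1 hcb
  have huc : u ≤ c := le_of_insertRow_snd_eq_some hu self_mem_insertRow_fst hac.le
  rcases hw : (insertRow R c).2 with _ | w
  · rw [insertRow_snd_insertRow_eq_none hw hcb] at he
    cases he
  refine ⟨w, rfl, le_of_insertRow_insertRow hac.le hu hw, ?_, by omega⟩
  by_cases hcR : c ∈ R
  · rw [insertRow_snd_of_mem hcR, Option.some_inj] at hw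
    exact hw ▸ (intervalMin_le hcR).trans_lt (by omega)
  · exact lt_of_insertRow_snd_of_forall_mem he hcb (isLeast_of_insertRow_snd_eq_some hcR hw).1.2
      fun t ht hct => lt_of_mem_insertRow_fst hcR hw ht hct

end TwoInsertions

noncomputable def insertRowWord : List ℕ → List ℕ → List ℕ × List ℕ
  | R, [] => (R, [])
  | R, a :: w => ((insertRowWord (insertRow R a).1 w).1,
      (insertRow R a).2.toList ++ (insertRowWord (insertRow R a).1 w).2)

def InsertionEquiv (R w w' : List ℕ) : Prop :=
  (∀ t, t ∈ (insertRowWord R w).1 ↔ t ∈ (insertRowWord R w').1) ∧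
    MicroEquiv (insertRowWord R w).2 (insertRowWord R w').2

lemma InsertionEquiv.symm {R w w' : List ℕ} (h : InsertionEquiv R w w') :
    InsertionEquiv R w' w :=
  ⟨fun t => (h.1 t).symm, Relation.EqvGen.symm _ _ h.2⟩

lemma pairwise_insertRowWord_fst {R : List ℕ} (hR : R.Pairwise (· < ·)) (w : List ℕ) :
    (insertRowWord R w).1.Pairwise (· < ·) := by
  induction w generalizing R with
  | nil => exact hR
  | cons a w ih => exact ih (pairwise_insertRow_fst hR)

lemma InsertionEquiv.fst_eq {R w w' : List ℕ} (h : InsertionEquiv R w w')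
    (hR : R.Pairwise (· < ·)) : (insertRowWord R w).1 = (insertRowWord R w').1 :=
  (pairwise_insertRowWord_fst hR w).eq_of_mem_iff (pairwise_insertRowWord_fst hR w') h.1

lemma microEquiv_swap_left {u d e : ℕ} (h₁ : u < d) (h₂ : d ≤ e) (h₃ : u + 1 < e) :
    MicroEquiv [u, e, d] [e, u, d] := by
  rcases h₂.lt_or_eq with h | rfl
  · exact Relation.EqvGen.rel _ _ (MicroStep.knuth1 [] [] u e d h₁ h)
  · exact Relation.EqvGen.rel _ _ (MicroStep.weak1 [] [] u d h₃)

lemma microEquiv_swap_right {u w c : ℕ} (h₁ : u ≤ w) (h₂ : w < c) (h₃ : u + 1 < c) :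
    MicroEquiv [w, u, c] [w, c, u] := by
  rcases h₁.lt_or_eq with h | rfl
  · exact Relation.EqvGen.rel _ _ (MicroStep.knuth2 [] [] u c w h h₂)
  · exact Relation.EqvGen.rel _ _ (MicroStep.weak2 [] [] u c h₃)

section Moves

variable {R : List ℕ} {a b c g x y : ℕ}

lemma insertionEquiv_swap_left_of_comm (hac : a < c) (hcb : c ≤ b) (hab : a + 1 < b)
    (ha : a ∈ R → a + 1 ∉ R) (h : a ∈ R ∨ b ∉ R ∧ ∃ t ∈ R, a < t ∧ t < b) :
    InsertionEquiv R [a, b, c] [b, a, c] := by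
  obtain ⟨he, hu, hrow⟩ := insertRow_insertRow_comm (by omega) h
  obtain ⟨hd, hrow'⟩ := insertRow_congr (x := c) hrow
  simp only [InsertionEquiv, insertRowWord, List.append_nil]
  refine ⟨hrow', ?_⟩
  rw [← hd, hu, ← he]
  rcases he' : (insertRow (insertRow R a).1 b).2 with _ | e
  · exact Relation.EqvGen.refl _
  obtain ⟨d, hd'⟩ := exists_insertRow_snd_eq_some self_mem_insertRow_fst hcb
  have hde : d ≤ e := le_of_insertRow_insertRow hcb hd' he'
  by_cases haR : a ∈ R
  · have ha1 : a + 1 ∉ R := ha haR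
    have hSR : (insertRow R a).1 = R := insertRow_fst_of_mem haR
    have hm := intervalMin_le haR
    rw [insertRow_snd_of_mem haR, hd']
    have had : a + 1 < d := lt_of_insertRow_snd_eq_some hd'
      (by rwa [mem_insertRow_fst_of_lt (by omega), hSR]) hac
    have hae : a + 1 < e := lt_of_insertRow_snd_eq_some he' (by rwa [hSR]) (by omega)
    exact microEquiv_swap_left (by omega) hde (by omega)
  · obtain ⟨hbR, t, ht, hat, htb⟩ := h.resolve_left haR
    obtain ⟨g, hg⟩ := exists_insertRow_snd_eq_some ht hat.le
    have hgb : g < b := (le_of_insertRow_snd_eq_some hg ht hat.le).trans_lt htb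
    have hag := (isLeast_of_insertRow_snd_eq_some haR hg).1.2
    have hbS : b ∉ (insertRow R a).1 := by
      rw [mem_insertRow_fst_of_gt (by omega)]; exact fun h' => hbR h'.1
    have hbe := (isLeast_of_insertRow_snd_eq_some hbS he').1.2
    rw [hg, hd']
    refine microEquiv_swap_left ?_ hde (by omega)
    refine lt_of_insertRow_snd_of_forall_mem hd' hac hag fun s hs has => ?_
    rw [mem_insertRow_fst] at hs
    rcases hs with rfl | ⟨hs, -⟩
    · exact hgb
    · exact lt_of_mem_insertRow_fst haR hg hs has

lemma insertionEquiv_swap_left_of_bump_lt (hac : a < c) (hcb : c ≤ b) (haR : a ∉ R)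
    (hbR : b ∈ R) (hg : (insertRow R a).2 = some g) (hgb : g < b) :
    InsertionEquiv R [a, b, c] [b, a, c] := by
  have hag := (isLeast_of_insertRow_snd_eq_some haR hg).1.2
  have hbS : b ∈ (insertRow R a).1 :=
    (mem_insertRow_fst_of_gt (by omega)).2 ⟨hbR, by rw [hg, ne_eq, Option.some_inj]; omega⟩
  simp only [InsertionEquiv, insertRowWord, List.append_nil]
  rw [insertRow_fst_of_mem hbS, insertRow_fst_of_mem hbR, insertRow_snd_of_mem hbS,
    insertRow_snd_of_mem hbR, hg]
  refine ⟨fun _ => Iff.rfl, ?_⟩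
  obtain ⟨d, hd⟩ := exists_insertRow_snd_eq_some hbS hcb
  have hgd : g < d := lt_of_insertRow_snd_of_forall_mem hd hac hag
    fun s hs has => lt_of_mem_insertRow_fst haR hg hs has
  have hdμ : d ≤ intervalMin (insertRow R a).1 b := le_of_insertRow_insertRow hcb
    (by rwa [insertRow_fst_of_mem hbS]) (insertRow_snd_of_mem hbS)
  simp only [hd, Option.toList_some, List.cons_append, List.nil_append]
  have hgμ : g ≤ intervalMin R b := by
    refine le_of_insertRow_snd_eq_some hg (mem_of_intervalMin_le hbR le_rfl (intervalMin_le hbR))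
      (not_lt.mp fun h => haR (mem_of_intervalMin_le hbR h.le (by omega)))
  rcases hgμ.lt_or_eq with hlt | heq
  · have hμ : g + 1 ≠ intervalMin R b := intervalMin_pred_not_mem hbR (insertRow_snd_mem hg)
    rw [intervalMin_insertRow_fst_of_succ_lt haR hg hbR (by omega)] at hdμ ⊢
    exact microEquiv_swap_left hgd hdμ (by omega)
  -- `a` bumped the bottom `g` of the interval of `b`, which now starts at `g + 1`
  have hμ' : intervalMin (insertRow R a).1 b = g + 1 := by
    refine intervalMin_eq (by omega) (fun t h₁ h₂ => ?_) fun t ht e => ?_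
    · rw [mem_insertRow_fst_of_gt (by omega), hg, ne_eq, Option.some_inj]
      exact ⟨mem_of_intervalMin_le hbR (by omega) h₂, by omega⟩
    · exact not_mem_insertRow_fst haR hg (Nat.succ_injective e ▸ ht)
  rw [hμ'] at hdμ ⊢
  rw [← heq, show d = g + 1 by omega]
  exact Relation.EqvGen.symm _ _ (Relation.EqvGen.rel _ _ (MicroStep.heckeIII [] [] g))

lemma insertionEquiv_swap_left_of_gap (hac : a < c) (hcb : c ≤ b) (hab : a + 1 < b)
    (hb : b ∈ R → b + 1 ∉ R) (haR : a ∉ R) (hgap : ∀ t ∈ R, a < t → b ≤ t) :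
    InsertionEquiv R [a, b, c] [b, a, c] := by
  obtain ⟨hbo, hUa, hVS⟩ := insertRow_insertRow_of_gap haR (by omega) hgap
  have hbRa : b ∈ R → (insertRow R a).2 = some b := fun hbR =>
    (insertRow_snd_eq_some_iff haR).2 ⟨⟨hbR, by omega⟩, fun s ⟨hs, has⟩ => hgap s hs has⟩
  have hSgap : ∀ t ∈ (insertRow R a).1, a < t → b < t := fun t ht hat => by
    rw [mem_insertRow_fst_of_gt hat] at ht
    exact (hgap t ht.1 hat).lt_of_ne fun e => ht.2 (e ▸ hbRa (e ▸ ht.1))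
  have hbS : b ∉ (insertRow R a).1 := fun h => (hSgap b h (by omega)).false
  have hcS : c ∉ (insertRow R a).1 := fun h => (hSgap c h hac).not_ge hcb
  have hTc : (insertRow (insertRow (insertRow R a).1 b).1 c).2 = some b := by
    refine insertRow_snd_of_gap self_mem_insertRow_fst hcb fun t ht htb => ?_
    rw [mem_insertRow_fst_of_lt htb] at ht
    have : t ≤ a := not_lt.mp fun hat => (hSgap t ht hat).not_gt htb
    omega
  have hSc : (insertRow (insertRow R a).1 c).2 = (insertRow (insertRow R a).1 b).2 :=
    insertRow_snd_eq_of_gap hcS hbS hcb fun t ht hct => hSgap t ht (by omega)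
  obtain ⟨hVc, hVc'⟩ := insertRow_congr (x := c) hVS
  simp only [InsertionEquiv, insertRowWord, List.append_nil]
  rw [hbo, hUa, hVc, hSc, hTc]
  refine ⟨fun t => ?_, ?_⟩
  · rw [hVc']
    simp only [mem_insertRow_fst, hTc, hSc]
    grind
  rcases hh : (insertRow (insertRow R a).1 b).2 with _ | h
  · exact Relation.EqvGen.refl _
  rcases ho : (insertRow R a).2 with _ | o
  · rw [insertRow_snd_insertRow_eq_none ho (by omega)] at hh
    cases hh
  have hhS := insertRow_snd_mem hh
  have hbh := (isLeast_of_insertRow_snd_eq_some hbS hh).1.2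
  have hoh : o < h := lt_of_mem_insertRow_fst haR ho hhS (by omega)
  have hbo' : b ≤ o := hgap o (insertRow_snd_mem ho) (isLeast_of_insertRow_snd_eq_some haR ho).1.2
  have hbh' : b + 1 < h := by
    rcases hbo'.lt_or_eq with hlt | rfl
    · omega
    · have hhR := ((mem_insertRow_fst_of_gt (by omega)).1 hhS).1
      have := hb (insertRow_snd_mem ho)
      exact (show b + 1 ≤ h by omega).lt_of_ne fun e => this (e ▸ hhR)
  exact Relation.EqvGen.symm _ _ (microEquiv_swap_right hbo' hoh hbh')

theorem insertionEquiv_swap_left (hac : a < c) (hcb : c ≤ b) (hab : a + 1 < b)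
    (ha : a ∈ R → a + 1 ∉ R) (hb : b ∈ R → b + 1 ∉ R) :
    InsertionEquiv R [a, b, c] [b, a, c] := by
  by_cases hcomm : a ∈ R ∨ b ∉ R ∧ ∃ t ∈ R, a < t ∧ t < b
  · exact insertionEquiv_swap_left_of_comm hac hcb hab ha hcomm
  push Not at hcomm
  obtain ⟨haR, hcomm⟩ := hcomm
  by_cases hgap : ∀ t ∈ R, a < t → b ≤ t
  · exact insertionEquiv_swap_left_of_gap hac hcb hab hb haR hgap
  push Not at hgap
  obtain ⟨t, ht, hat, htb⟩ := hgap
  have hbR : b ∈ R := by_contra fun hbR => (hcomm hbR t ht hat).not_gt htb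
  obtain ⟨g, hg⟩ := exists_insertRow_snd_eq_some ht hat.le
  exact insertionEquiv_swap_left_of_bump_lt hac hcb haR hbR hg
    ((le_of_insertRow_snd_eq_some hg ht hat.le).trans_lt htb)

theorem insertionEquiv_swap_right (hac : a < c) (hcb : c < b) (hc : c ∈ R → c + 1 ∉ R) :
    InsertionEquiv R [c, a, b] [c, b, a] := by
  have hcS : c ∈ (insertRow R c).1 := self_mem_insertRow_fst
  obtain ⟨u, hu⟩ := exists_insertRow_snd_eq_some hcS hac.le
  simp only [InsertionEquiv, insertRowWord, List.append_nil]
  by_cases hA : a ∈ (insertRow R c).1 ∨ b ∉ (insertRow R c).1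
  · obtain ⟨he, hu', hrow⟩ := insertRow_insertRow_comm (by omega)
      (hA.imp_right fun hb => ⟨hb, c, hcS, hac, hcb⟩)
    refine ⟨hrow, ?_⟩
    rw [he, hu', hu]
    rcases he' : (insertRow (insertRow R c).1 b).2 with _ | e
    · exact Relation.EqvGen.refl _
    obtain ⟨w, hw, huw, hwe, hue⟩ := exists_insertRow_snd_between hac hcb hc hu he'
    rw [hw]
    exact microEquiv_swap_right huw hwe hue
  push Not at hA
  obtain ⟨haS, hbS⟩ := hA
  have huc : u ≤ c := le_of_insertRow_snd_eq_some hu hcS hac.le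
  have hbS' : b ∈ (insertRow (insertRow R c).1 a).1 := (mem_insertRow_fst_of_gt (by omega)).2
    ⟨hbS, by rw [hu, ne_eq, Option.some_inj]; omega⟩
  rw [insertRow_fst_of_mem hbS', insertRow_fst_of_mem hbS, insertRow_snd_of_mem hbS',
    insertRow_snd_of_mem hbS, hu]
  refine ⟨fun _ => Iff.rfl, ?_⟩
  obtain ⟨w, hw, huw, hwe, hue⟩ :=
    exists_insertRow_snd_between hac hcb hc hu (insertRow_snd_of_mem hbS)
  rw [intervalMin_insertRow_fst_of_succ_lt haS hu hbS hue, hw]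
  exact microEquiv_swap_right huw hwe hue

theorem insertionEquiv_head_swap (hxy : x < y) : InsertionEquiv R [x, x, y] [x, y, x] := by
  have hxS : x ∈ (insertRow R x).1 := self_mem_insertRow_fst
  simp only [InsertionEquiv, insertRowWord, List.append_nil, insertRow_of_mem hxS,
    insertRow_insertRow_of_mem_of_lt hxS hxy, Option.toList_some, implies_true, true_and]
  rcases hc : (insertRow (insertRow R x).1 y).2 with _ | c
  · exact Relation.EqvGen.refl _
  rcases ha : (insertRow R x).2 with _ | a
  · rw [insertRow_snd_insertRow_eq_none ha hxy] at hc
    cases hc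
  have hm := intervalMin_le hxS
  simp only [Option.toList_some, List.cons_append, List.nil_append]
  by_cases hxR : x ∈ R
  · rw [insertRow_snd_of_mem hxR, Option.some_inj] at ha
    rw [insertRow_fst_of_mem hxR] at hc hm ⊢
    subst ha
    by_cases hmerge : c = intervalMin R x
    · rw [hmerge]; exact Relation.EqvGen.refl _
    have hxc : x + 1 < c := by
      by_cases hyR : y ∈ R
      · rw [insertRow_snd_of_mem hyR, Option.some_inj] at hc
        subst hc
        by_contra! h
        exact hmerge (intervalMin_eq_of_le_succ hxR hyR hxy.le h).symm
      · have := (isLeast_of_insertRow_snd_eq_some hyR hc).1.2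
        omega
    exact microEquiv_swap_right le_rfl (by omega) (by omega)
  · have hxa := (isLeast_of_insertRow_snd_eq_some hxR ha).1.2
    have hac : a < c := lt_of_insertRow_snd_of_forall_mem hc hxy hxa
      fun t ht hxt => lt_of_mem_insertRow_fst hxR ha ht hxt
    exact microEquiv_swap_right (by omega) hac (by omega)

lemma insertRow_succ_of_mem (hx : x ∈ R) (hx1 : x + 1 ∈ R) :
    insertRow R (x + 1) = insertRow R x := by
  rw [insertRow_of_mem hx, insertRow_of_mem hx1,
    intervalMin_eq_of_le_succ hx hx1 (Nat.le_succ x) (intervalMin_le hx1)]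

theorem insertionEquiv_hecke (x : ℕ) : InsertionEquiv R [x, x, x + 1] [x, x + 1, x + 1] := by
  have hx : x ∈ (insertRow (insertRow R x).1 (x + 1)).1 :=
    (mem_insertRow_fst_of_lt (Nat.lt_succ_self x)).2 self_mem_insertRow_fst
  have h := insertionEquiv_head_swap (R := R) (Nat.lt_succ_self x)
  simp only [InsertionEquiv, insertRowWord, insertRow_succ_of_mem hx self_mem_insertRow_fst] at h ⊢
  exact h

end Moves

section FullyCommutative

variable {R w s : List ℕ} {a : ℕ}

lemma heckeEquiv_move_left (hw : ∀ t ∈ w, t + 1 < a ∨ a + 1 < t) (p q : List ℕ) :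
    HeckeEquiv (p ++ w ++ a :: q) (p ++ a :: (w ++ q)) := by
  induction w generalizing p with
  | nil => simpa [HeckeEquiv] using Relation.EqvGen.refl _
  | cons t w ih =>
    have hstep := HeckeStep.comm p (w ++ q) t a (hw t List.mem_cons_self)
    refine Relation.EqvGen.trans _ _ _ ?_ (Relation.EqvGen.rel _ _ hstep)
    simpa [HeckeEquiv] using ih (fun t' ht' => hw t' (List.mem_cons_of_mem _ ht')) (p ++ [t])

lemma exists_eq_append_succ (hR : R.Pairwise (· < ·)) (ha : a ∈ R) (ha1 : a + 1 ∈ R) :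
    ∃ u v, R = u ++ a :: (a + 1) :: v ∧ ∀ t ∈ v, a + 1 < t := by
  obtain ⟨u, t, rfl⟩ := List.mem_iff_append.mp ha
  rw [List.pairwise_append, List.pairwise_cons] at hR
  obtain ⟨-, ⟨hat, ht⟩, hut⟩ := hR
  have ha1t : a + 1 ∈ t := by
    rcases List.mem_append.mp ha1 with h | h
    · exact absurd (hut _ h a List.mem_cons_self) (by omega)
    · exact (List.mem_cons.mp h).resolve_left (by omega)
  obtain ⟨u', v, rfl⟩ := List.mem_iff_append.mp ha1t
  have hu' : u' = [] := List.eq_nil_iff_forall_not_mem.mpr fun x hx =>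
    absurd ((List.pairwise_append.mp ht).2.2 x hx (a + 1) List.mem_cons_self)
      (by have := hat x (by simp [hx]); omega)
  subst hu'
  exact ⟨u, v, rfl, (List.pairwise_cons.mp ht).1⟩

lemma succ_not_mem_of_fullyCommutative (hR : R.Pairwise (· < ·))
    (hfc : FullyCommutative (R ++ w ++ a :: s)) (hw : ∀ t ∈ w, t + 1 < a ∨ a + 1 < t)
    (ha : a ∈ R) : a + 1 ∉ R := by
  intro ha1
  obtain ⟨u, v, rfl, hv⟩ := exists_eq_append_succ hR ha ha1
  have hvw : ∀ t ∈ v ++ w, t + 1 < a ∨ a + 1 < t := fun t ht =>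
    (List.mem_append.mp ht).elim (fun h => Or.inr (hv t h)) (hw t)
  refine hfc _ ?_ ⟨u, v ++ w ++ s, a, Or.inl rfl⟩
  simpa using heckeEquiv_move_left hvw (u ++ [a, a + 1]) s

lemma succ_not_mem_of_fullyCommutative_head (hR : R.Pairwise (· < ·))
    (hfc : FullyCommutative (R ++ a :: s)) : a ∈ R → a + 1 ∉ R :=
  succ_not_mem_of_fullyCommutative (w := []) hR (by simpa using hfc) nofun

lemma succ_not_mem_of_fullyCommutative_pair {p q r : ℕ} (hR : R.Pairwise (· < ·))
    (hfc : FullyCommutative (R ++ [p, q, r])) (hpq : p + 1 < q ∨ q + 1 < p) :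
    (p ∈ R → p + 1 ∉ R) ∧ (q ∈ R → q + 1 ∉ R) :=
  ⟨succ_not_mem_of_fullyCommutative_head hR hfc,
    succ_not_mem_of_fullyCommutative (w := [p]) hR (by simpa using hfc) (by simpa using hpq)⟩

end FullyCommutative

lemma eq_nil_of_triple_eq_append {x y z a b c : ℕ} {u v : List ℕ}
    (h : [x, y, z] = u ++ a :: b :: c :: v) : u = [] ∧ v = [] := by
  have := congrArg List.length h
  simp only [List.length_cons, List.length_nil, List.length_append] at this
  exact ⟨List.eq_nil_of_length_eq_zero (by omega), List.eq_nil_of_length_eq_zero (by omega)⟩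

theorem insertionEquiv_of_microStep {R : List ℕ} {x y z x' y' z' : ℕ} (hR : R.Pairwise (· < ·))
    (hmove : MicroStep [x, y, z] [x', y', z'])
    (hfc : FullyCommutative (R ++ [x, y, z]) ∨ FullyCommutative (R ++ [x', y', z'])) :
    InsertionEquiv R [x, y, z] [x', y', z'] := by
  generalize hw : [x, y, z] = w at hmove
  generalize hw' : [x', y', z'] = w' at hmove
  cases hmove <;> obtain ⟨rfl, rfl⟩ := eq_nil_of_triple_eq_append hw <;>
    simp only [List.nil_append, List.cons.injEq] at hw hw' <;>
    obtain ⟨rfl, rfl, rfl, -⟩ := hw <;> obtain ⟨rfl, rfl, rfl, -⟩ := hw'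
  case knuth1 =>
    have hfc' := hfc.elim (fun h => succ_not_mem_of_fullyCommutative_pair hR h (by omega))
      fun h => (succ_not_mem_of_fullyCommutative_pair hR h (by omega)).symm
    exact insertionEquiv_swap_left (by omega) (by omega) (by omega) hfc'.1 hfc'.2
  case weak1 =>
    have hfc' := hfc.elim (fun h => succ_not_mem_of_fullyCommutative_pair hR h (by omega))
      fun h => (succ_not_mem_of_fullyCommutative_pair hR h (by omega)).symm
    exact insertionEquiv_swap_left (by omega) le_rfl (by omega) hfc'.1 hfc'.2
  case knuth2 =>
    have hfc' := hfc.elim (succ_not_mem_of_fullyCommutative_head hR)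
      (succ_not_mem_of_fullyCommutative_head hR)
    exact insertionEquiv_swap_right (by omega) (by omega) hfc'
  case weak2 => exact insertionEquiv_head_swap (by omega)
  case heckeIII => exact insertionEquiv_hecke _

/-- Single-row lemma for the `⋆`-insertion: if `x y z ∼ x' y' z'` by a single
micro-move and `row(R)·x·y·z` is fully-commutative for the increasing row `R`,
then inserting `x, y, z` successively into `R` yields the same resulting first
row as inserting `x', y', z'`, and the corresponding sequences of output letters
(with empty outputs dropped) are related by the micro-move equivalence. -/
theorem single_row_micro_move (R : List ℕ) (x y z x' y' z' : ℕ)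
    (hR : List.Chain' (· < ·) R)
    (hmove : MicroStep [x, y, z] [x', y', z'] ∨ MicroStep [x', y', z'] [x, y, z])
    (hfc : FullyCommutative (R ++ [x, y, z])) :
    (insertRow (insertRow (insertRow R x).1 y).1 z).1 =
      (insertRow (insertRow (insertRow R x').1 y').1 z').1 ∧
    MicroEquiv
      ((insertRow R x).2.toList ++ (insertRow (insertRow R x).1 y).2.toList ++
        (insertRow (insertRow (insertRow R x).1 y).1 z).2.toList)
      ((insertRow R x').2.toList ++ (insertRow (insertRow R x').1 y').2.toList ++
        (insertRow (insertRow (insertRow R x').1 y').1 z').2.toList) := by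
  have hR' : R.Pairwise (· < ·) := List.isChain_iff_pairwise.mp hR
  have h : InsertionEquiv R [x, y, z] [x', y', z'] := by
    rcases hmove with h | h
    · exact insertionEquiv_of_microStep hR' h (Or.inl hfc)
    · exact (insertionEquiv_of_microStep hR' h (Or.inr hfc)).symm
  simpa [insertRowWord, List.append_assoc] using And.intro (h.fst_eq hR') h.2
end

section
/- In the micro-move equivalence, for letters b_q < ... < b_1 < x < v_s < ... < v_1 and u_q < ... < u_1 with u_i ≤ b_i and u_1 < x-1, the word b_q...b_1 x v_s...v_1 u_q...u_1 is equivalent to b_q u_q ... b_2 u_2 b_1 u_1 x v_s...v_1, where additionally b_{i-1} > u_i + 1 for 2 ≤ i ≤ q. -/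
/-! Induct on `q`. The word starts with `b_q`, and the letters `b_{q-1} ⋯ b_1 x v_s ⋯ v_1`
following it increase and all exceed `u_q + 1`. So `u_q` commutes leftwards through them by
moves (I2), one letter at a time, until it meets `b_q ≥ u_q`; the last move is (I2) if
`u_q < b_q` and (II2) if `u_q = b_q`. This leaves `b_q u_q` in front of the word for `q - 1`. -/

theorem MicroStep.append_left (p : List ℕ) {l₁ l₂ : List ℕ} (h : MicroStep l₁ l₂) :
    MicroStep (p ++ l₁) (p ++ l₂) := by
  cases h <;> simp only [← List.append_assoc]
  · exact .knuth1 _ _ _ _ _ ‹_› ‹_›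
  · exact .knuth2 _ _ _ _ _ ‹_› ‹_›
  · exact .weak1 _ _ _ _ ‹_›
  · exact .weak2 _ _ _ _ ‹_›
  · exact .heckeIII _ _ _

theorem MicroEquiv.append_left (p : List ℕ) {l₁ l₂ : List ℕ} (h : MicroEquiv l₁ l₂) :
    MicroEquiv (p ++ l₁) (p ++ l₂) := by
  induction h with
  | rel _ _ h => exact .rel _ _ (h.append_left p)
  | refl => exact .refl _
  | symm _ _ _ ih => exact .symm _ _ ih
  | trans _ _ _ _ _ ih₁ ih₂ => exact .trans _ _ _ ih₁ ih₂

theorem MicroStep.cons_swap {a z c : ℕ} (t : List ℕ) (haz : a ≤ z) (hzc : z < c)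
    (hac : a + 1 < c) : MicroStep (z :: a :: c :: t) (z :: c :: a :: t) := by
  rcases haz.lt_or_eq with haz | rfl
  · exact .knuth2 [] t a c z haz hzc
  · exact .weak2 [] t a c hac

theorem MicroEquiv.slide {a z : ℕ} {L : List ℕ} (t : List ℕ)
    (hL : (z :: L).Pairwise (· < ·)) (haz : a ≤ z) (haL : ∀ c ∈ L, a + 1 < c) :
    MicroEquiv (z :: (L ++ a :: t)) (z :: a :: (L ++ t)) := by
  induction L generalizing z with
  | nil => exact .refl _
  | cons c L ih =>
    obtain ⟨hzL, hcL⟩ := List.pairwise_cons.1 hL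
    have hac := haL c List.mem_cons_self
    have hslide : MicroEquiv (z :: (c :: L ++ a :: t)) (z :: c :: a :: (L ++ t)) :=
      (ih hcL (by omega) fun d hd => haL d (List.mem_cons_of_mem c hd)).append_left [z]
    exact .trans _ _ _ hslide
      (.symm _ _ (.rel _ _ (.cons_swap _ haz (hzL c List.mem_cons_self) hac)))

theorem pairwise_lt_reverse_ofFn_append {q s x : ℕ} {b : Fin q → ℕ} {v : Fin s → ℕ}
    (hb : StrictAnti b) (hv : StrictAnti v) (hbx : ∀ i, b i < x) (hxv : ∀ i, x < v i) :
    ((List.ofFn b).reverse ++ x :: (List.ofFn v).reverse).Pairwise (· < ·) := by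
  simp only [List.pairwise_append, List.pairwise_reverse, List.pairwise_ofFn, List.pairwise_cons,
    List.mem_reverse, List.mem_ofFn, forall_exists_index, forall_apply_eq_imp_iff, List.mem_cons,
    forall_eq_or_imp]
  exact ⟨hb, ⟨hxv, hv⟩, fun i => ⟨hbx i, fun j => (hbx i).trans (hxv j)⟩⟩

theorem apply_last_add_one_lt_apply_castSucc {n : ℕ} {b u : Fin (n + 1) → ℕ}
    (hb : StrictAnti b)
    (hfar : ∀ (i : Fin (n + 1)) (hi : (i : ℕ) + 1 < n + 1), u ⟨(i : ℕ) + 1, hi⟩ + 1 < b i)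
    (j : Fin n) : u (Fin.last n) + 1 < b j.castSucc := by
  obtain ⟨m, rfl⟩ := Nat.exists_eq_add_one_of_ne_zero j.pos.ne'
  calc u (Fin.last (m + 1)) + 1 < b ⟨m, by omega⟩ := hfar ⟨m, by omega⟩ (by simp)
    _ ≤ b j.castSucc := hb.antitone (Fin.le_iff_val_le_val.2 (by simp only [Fin.val_castSucc]; omega))

-- `b i`, `u i`, `v i` stand for the paper's `b_{i+1}`, `u_{i+1}`, `v_{i+1}`.
theorem lemma_mv1_general (q s x : ℕ) (b u : Fin q → ℕ) (v : Fin s → ℕ)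
    (hb : StrictAnti b) (hv : StrictAnti v)
    (hbx : ∀ i, b i < x)
    (hxv : ∀ i, x < v i)
    (hub : ∀ i, u i ≤ b i)
    (hux : ∀ i, u i + 1 < x)
    (hfar : ∀ (i : Fin q) (hi : (i : ℕ) + 1 < q), u ⟨(i : ℕ) + 1, hi⟩ + 1 < b i) :
    MicroEquiv
      ((List.ofFn b).reverse ++ x :: ((List.ofFn v).reverse ++ (List.ofFn u).reverse))
      ((List.ofFn (fun i => [b i, u i])).reverse.flatten ++ x :: (List.ofFn v).reverse) := by
  induction q with
  | zero => simpa using .refl _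
  | succ n ih =>
    have hsorted := pairwise_lt_reverse_ofFn_append hb hv hbx hxv
    simp only [List.ofFn_succ_last, List.reverse_append, List.reverse_cons, List.reverse_nil,
      List.nil_append, List.cons_append, List.flatten_cons] at hsorted ⊢
    have hbound : ∀ c ∈ (List.ofFn fun i : Fin n => b i.castSucc).reverse ++
        x :: (List.ofFn v).reverse, u (Fin.last n) + 1 < c := by
      simp only [List.mem_append, List.mem_reverse, List.mem_ofFn, List.mem_cons]
      rintro c (⟨j, rfl⟩ | rfl | ⟨j, rfl⟩)
      · exact apply_last_add_one_lt_apply_castSucc hb hfar j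
      · exact hux _
      · exact (hux _).trans (hxv j)
    have hslide := MicroEquiv.slide (List.ofFn fun i : Fin n => u i.castSucc).reverse
      hsorted (hub _) hbound
    have hrest := (ih (fun i => b i.castSucc) (fun i => u i.castSucc)
      (hb.comp_strictMono Fin.strictMono_castSucc) (fun _ => hbx _) (fun _ => hub _)
      (fun _ => hux _) fun i hi => hfar i.castSucc (by simp only [Fin.val_castSucc]; omega))
    simp only [List.append_assoc, List.cons_append] at hslide
    exact .trans _ _ _ hslide (hrest.append_left [b (Fin.last n), u (Fin.last n)])

/-- Lemma mv1: for letters `b_q < ⋯ < b_1 < x < v_s < ⋯ < v_1` and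
`u_q < ⋯ < u_1` with `u_i ≤ b_i`, `u_1 < x - 1` and `b_{i-1} > u_i + 1`
for `2 ≤ i ≤ q`, the word `b_q ⋯ b_1 x v_s ⋯ v_1 u_q ⋯ u_1` is equivalent to
`b_q u_q ⋯ b_2 u_2 b_1 u_1 x v_s ⋯ v_1` under the micro-moves.  Here `b i`,
`u i`, `v i` denote `b_{i+1}`, `u_{i+1}`, `v_{i+1}`. -/
theorem lemma_mv1 (q s x : ℕ) (b u : Fin q → ℕ) (v : Fin s → ℕ)
    (hb : StrictAnti b) (hu : StrictAnti u) (hv : StrictAnti v)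
    (hbx : ∀ i, b i < x)
    (hxv : ∀ i, x < v i)
    (hub : ∀ i, u i ≤ b i)
    (hux : ∀ i, u i + 1 < x)
    (hfar : ∀ (i : Fin q) (hi : (i : ℕ) + 1 < q), u ⟨(i : ℕ) + 1, hi⟩ + 1 < b i) :
    MicroEquiv
      ((List.ofFn b).reverse ++ x :: ((List.ofFn v).reverse ++ (List.ofFn u).reverse))
      ((List.ofFn (fun i => [b i, u i])).reverse.flatten ++ x :: (List.ofFn v).reverse) :=
  lemma_mv1_general q s x b u v hb hv hbx hxv hub hux hfar
end
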